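/- arXiv:1509.04913 — 6 statements merged into one kernel-verified Lean document; each statement's English description precedes it below -/
import Mathlib

section
/- Let S be a finite simple non-abelian group, let n ≥ 1, and let G be a subgroup of S^n such that proj_i(G) = S for every i ∈ {1,…,n}. Then G is a product of subdiagonals of S^n: there exist an equivalence relation ∼ on {1,…,n} and automorphisms α_1, …, α_n of S such that G = { g ∈ S^n : α_i^{-1}(g_i) = α_j^{-1}(g_j) for all i, j with i ∼ j }. -/
/-!
Let `p i : G →* S` be the coordinate projections, all surjective. As `S` is simple, the image
under `p i` of the normal subgroup `ker p j` is trivial or all of `S`; the first case forces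
`ker p i = ker p j` (otherwise `p i` would be trivial), and then `p j = β ∘ p i` for an
automorphism `β` of `S`. So grouping coordinates by the kernel of their projection gives the
equivalence relation, and composing with the automorphisms puts `G` inside the product of
subdiagonals. Conversely, if the kernels of `p j` and `p i` differ, `ker p j` maps onto `S`; since
`S` is perfect, `p i` then maps `⁅ker p j, N⁆ ≤ ker p j ⊓ N` onto `⁅S, S⁆ = S` whenever `N` maps
onto `S`. By induction `G` surjects onto `S^T` for any set `T` of coordinates with pairwise
distinct kernels, and taking one coordinate per class shows that `G` is the whole product.
-/

open Function

section Kernels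

variable {G S : Type*} [Group G] [Group S]

theorem commutator_eq_top_of_exists_mul_ne [IsSimpleGroup S] (hS : ∃ a b : S, a * b ≠ b * a) :
    commutator S = ⊤ := by
  refine (Subgroup.commutator_normal (⊤ : Subgroup S) ⊤).eq_bot_or_eq_top.resolve_left
    fun hbot => ?_
  obtain ⟨a, b, hab⟩ := hS
  exact hab (((commutator_eq_bot_iff S).mp hbot).is_comm.comm a b)

theorem MonoidHom.exists_mulEquiv_apply_eq_of_ker_eq {A B : Type*} [Group A] [Group B]
    {p : G →* A} {q : G →* B} (hp : Surjective p) (hq : Surjective q) (h : p.ker = q.ker) :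
    ∃ β : A ≃* B, ∀ g, β (p g) = q g :=
  ⟨((QuotientGroup.quotientKerEquivOfSurjective p hp).symm.trans
      (QuotientGroup.quotientMulEquivOfEq h)).trans
      (QuotientGroup.quotientKerEquivOfSurjective q hq), fun g => by
    have hg : (QuotientGroup.quotientKerEquivOfSurjective p hp).symm (p g) = g :=
      (MulEquiv.symm_apply_eq _).mpr rfl
    simp only [MulEquiv.trans_apply, hg]
    rfl⟩

variable [IsSimpleGroup S] {p q : G →* S}

theorem MonoidHom.ker_le_or_map_ker_eq_top (hp : Surjective p) (q : G →* S) :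
    q.ker ≤ p.ker ∨ q.ker.map p = ⊤ := by
  rw [← Subgroup.map_eq_bot_iff]
  exact (q.normal_ker.map p hp).eq_bot_or_eq_top

theorem MonoidHom.ker_eq_of_ker_le (hp : Surjective p) (hq : Surjective q) (h : q.ker ≤ p.ker) :
    q.ker = p.ker := by
  refine le_antisymm h ((ker_le_or_map_ker_eq_top hq p).resolve_right fun htop => ?_)
  have : p.ker = ⊤ := by rw [← Subgroup.comap_map_eq_self h, htop, Subgroup.comap_top]
  obtain ⟨s, hs⟩ := exists_ne (1 : S)
  obtain ⟨g, rfl⟩ := hp s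
  exact hs (p.mem_ker.mp (this ▸ Subgroup.mem_top g))

theorem MonoidHom.map_ker_eq_top_of_ker_ne (hp : Surjective p) (hq : Surjective q)
    (h : q.ker ≠ p.ker) : q.ker.map p = ⊤ :=
  (ker_le_or_map_ker_eq_top hp q).resolve_left fun hle => h (ker_eq_of_ker_le hp hq hle)

end Kernels

section Perfect

variable {ι G S : Type*} [Group G] [Group S] {p : ι → G →* S}

theorem map_biInf_ker_eq_top (hS : commutator S = ⊤) {i : ι} (hp : Surjective (p i))
    (T : Finset ι) (hT : ∀ j ∈ T, (p j).ker.map (p i) = ⊤) :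
    (⨅ j ∈ T, (p j).ker).map (p i) = ⊤ := by
  classical
  induction T using Finset.induction_on with
  | empty => simpa [← MonoidHom.range_eq_map, MonoidHom.range_eq_top] using hp
  | insert j T _ ih =>
    have : (⨅ k ∈ T, (p k).ker).Normal :=
      Subgroup.normal_iInf_normal fun k => Subgroup.normal_iInf_normal fun _ => (p k).normal_ker
    rw [Finset.iInf_insert, eq_top_iff]
    calc ⊤ = ⁅(⊤ : Subgroup S), ⊤⁆ := hS.symm
      _ = ⁅(p j).ker.map (p i), (⨅ k ∈ T, (p k).ker).map (p i)⁆ := by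
          rw [hT j (Finset.mem_insert_self j T), ih fun k hk => hT k (Finset.mem_insert_of_mem hk)]
      _ = ⁅(p j).ker, ⨅ k ∈ T, (p k).ker⁆.map (p i) := (Subgroup.map_commutator _ _ _).symm
      _ ≤ _ := Subgroup.map_mono (Subgroup.commutator_le_inf _ _)

theorem exists_apply_eq_of_pairwise_ker_ne [IsSimpleGroup S] (hS : commutator S = ⊤)
    (hp : ∀ i, Surjective (p i)) (T : Finset ι)
    (hT : (T : Set ι).Pairwise fun i j => (p i).ker ≠ (p j).ker) (f : ι → S) :
    ∃ g, ∀ i ∈ T, p i g = f i := by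
  classical
  induction T using Finset.induction_on with
  | empty => exact ⟨1, by simp⟩
  | insert i T hi ih =>
    rw [Finset.coe_insert, Set.pairwise_insert] at hT
    obtain ⟨g₀, hg₀⟩ := ih hT.1
    have hmap := map_biInf_ker_eq_top hS (hp i) T fun j hj =>
      MonoidHom.map_ker_eq_top_of_ker_ne (hp i) (hp j)
        (hT.2 j hj (ne_of_mem_of_not_mem hj hi).symm).2
    obtain ⟨g₁, hg₁, hg₁i⟩ := hmap ▸ Subgroup.mem_top (f i * (p i g₀)⁻¹)
    simp only [SetLike.mem_coe, Subgroup.mem_iInf, MonoidHom.mem_ker] at hg₁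
    refine ⟨g₁ * g₀, Finset.forall_mem_insert _ _ _ |>.mpr ⟨?_, fun j hj => ?_⟩⟩
    · rw [map_mul, hg₁i, inv_mul_cancel_right]
    · rw [map_mul, hg₁ j hj, hg₀ j hj, one_mul]

end Perfect

section Subdiagonal

variable {ι S : Type*} [Group S]

def subdiagonalProduct (r : Setoid ι) (α : ι → MulAut S) : Set (ι → S) :=
  {g | ∀ i j, r i j → (α i).symm (g i) = (α j).symm (g j)}

variable {r : Setoid ι} {α : ι → MulAut S}

theorem eq_of_mem_subdiagonalProduct {g h : ι → S} (hg : g ∈ subdiagonalProduct r α)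
    (hh : h ∈ subdiagonalProduct r α) (hgh : ∀ x : Quotient r, g x.out = h x.out) : g = h := by
  funext i
  apply (α i).symm.injective
  rw [hg i _ (Setoid.symm (Quotient.mk_out i)), hh i _ (Setoid.symm (Quotient.mk_out i)), hgh]

theorem subset_subdiagonalProduct {G : Set (ι → S)}
    (hα : ∀ g ∈ G, ∀ i, α i (g (Quotient.mk r i).out) = g i) : G ⊆ subdiagonalProduct r α := by
  intro g hg i j hij
  rw [← hα g hg i, ← hα g hg j, MulEquiv.symm_apply_apply, MulEquiv.symm_apply_apply,
    Quotient.sound hij]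

theorem Subgroup.exists_eq_subdiagonalProduct [Finite ι] [IsSimpleGroup S]
    (hS : _root_.commutator S = ⊤) (G : Subgroup (ι → S))
    (hG : ∀ i, G.map (Pi.evalMonoidHom (fun _ => S) i) = ⊤) :
    ∃ (r : Setoid ι) (α : ι → MulAut S), (G : Set (ι → S)) = subdiagonalProduct r α := by
  let p : ι → G →* S := fun i => (Pi.evalMonoidHom (fun _ => S) i).comp G.subtype
  have hp : ∀ i, Surjective (p i) := fun i => by
    rw [← MonoidHom.range_eq_top, MonoidHom.range_comp, Subgroup.range_subtype, hG i]
  let r : Setoid ι := Setoid.ker fun i => (p i).ker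
  choose α hα using fun i => MonoidHom.exists_mulEquiv_apply_eq_of_ker_eq (hp _) (hp i)
    (Setoid.ker_apply_mk_out (f := fun i => (p i).ker) i)
  have hG_sub : (G : Set (ι → S)) ⊆ subdiagonalProduct r α :=
    subset_subdiagonalProduct fun g hg i => hα i ⟨g, hg⟩
  refine ⟨r, α, hG_sub.antisymm fun g hg => ?_⟩
  have hreps := Set.finite_range (Quotient.out : Quotient r → ι)
  have hker : (hreps.toFinset : Set ι).Pairwise fun i j => (p i).ker ≠ (p j).ker := by
    rw [Set.Finite.coe_toFinset]
    rintro _ ⟨x, rfl⟩ _ ⟨y, rfl⟩ hxy hker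
    exact hxy (congrArg Quotient.out (Quotient.out_equiv_out.mp hker))
  obtain ⟨g', hg'⟩ := exists_apply_eq_of_pairwise_ker_ne hS hp hreps.toFinset hker g
  obtain rfl : g = g' := eq_of_mem_subdiagonalProduct hg (hG_sub g'.2) fun x =>
    (hg' x.out (by simp)).symm
  exact g'.2

end Subdiagonal

theorem stmt_1_general {S : Type*} [Group S] [IsSimpleGroup S]
    (hna : ∃ a b : S, a * b ≠ b * a) {n : ℕ}
    (G : Subgroup (Fin n → S))
    (h : ∀ i : Fin n, Subgroup.map (Pi.evalMonoidHom (fun _ => S) i) G = ⊤) :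
    ∃ (r : Setoid (Fin n)) (α : Fin n → MulAut S),
      (G : Set (Fin n → S)) =
        {g | ∀ i j : Fin n, r.r i j → (α i).symm (g i) = (α j).symm (g j)} :=
  G.exists_eq_subdiagonalProduct (commutator_eq_top_of_exists_mul_ne hna) h

/-- Let `S` be a finite simple non-abelian group, `n ≥ 1`, and `G ≤ Sⁿ`
with `proj_i(G) = S` for all `i`. Then `G` is a product of subdiagonals of `Sⁿ`:
there are an equivalence relation `∼` on `{1,…,n}` and automorphisms `α₁,…,αₙ` of `S`
such that `G = {g | (α i)⁻¹ (g i) = (α j)⁻¹ (g j) whenever i ∼ j}`. -/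
theorem stmt_1 {S : Type*} [Group S] [Finite S] [IsSimpleGroup S]
    (hna : ∃ a b : S, a * b ≠ b * a) {n : ℕ} (hn : 1 ≤ n)
    (G : Subgroup (Fin n → S))
    (h : ∀ i : Fin n, Subgroup.map (Pi.evalMonoidHom (fun _ => S) i) G = ⊤) :
    ∃ (r : Setoid (Fin n)) (α : Fin n → MulAut S),
      (G : Set (Fin n → S)) =
        {g | ∀ i j : Fin n, r.r i j → (α i).symm (g i) = (α j).symm (g j)} :=
  stmt_1_general hna G h
end

section
/- Let S and L be finite groups with S a normal subgroup of L, the quotient L/S solvable, and S simple non-abelian. Let n ≥ 1 and let G be a subgroup of L^n such that proj_i(G) contains S for every i ∈ {1,…,n}. Then G ∩ S^n is a product of subdiagonals of S^n: there exist an equivalence relation ∼ on {1,…,n} and automorphisms α_1, …, α_n of S such that an element g ∈ S^n belongs to G if and only if α_i^{-1}(g_i) = α_j^{-1}(g_j) for all i, j with i ∼ j. -/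
/-!
`N := G ∩ Sⁿ` is the kernel of `G → (L/S)ⁿ`, so `G/N` is solvable. The `i`-th projection of `N`
is normal in `proj_i(G) ⊇ S`; were it trivial, `proj_i(G)` would be a quotient of `G/N`, hence
solvable, and so would `S`. So `N` is a subdirect product of copies of `S`.

For such an `N`, relate `i ∼ j` when the elements of `N` vanish at `i` exactly when they vanish
at `j`; then the `j`-th coordinate of elements of `N` is an automorphic image of the `i`-th one.
If `c ≁ d`, the `c`-th projection of the elements of `N` vanishing at `d` is a nontrivial normal
subgroup of `S`, hence all of `S`. As `S` is perfect, taking commutators shows the same for the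
elements vanishing on all coordinates not related to `c` at once, and gluing such elements
class by class yields every `g` satisfying the diagonal relations.
-/

open Subgroup

instance Subgroup.normal_pi {η : Type*} {G : η → Type*} [∀ i, Group (G i)] (I : Set η)
    (H : ∀ i, Subgroup (G i)) [hH : ∀ i, (H i).Normal] : (pi I H).Normal :=
  ⟨fun _ hx g i hi => (hH i).conj_mem _ (hx i hi) (g i)⟩

theorem isSolvable_pi {η Q : Type*} [Group Q] [Group.IsSolvable Q] :
    Group.IsSolvable (η → Q) := by
  obtain ⟨k, hk⟩ := Group.IsSolvable.solvable (G := Q)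
  have hle : ∀ m, derivedSeries (η → Q) m ≤ pi Set.univ fun _ => derivedSeries Q m := by
    intro m
    induction m with
    | zero => exact (pi_top _).ge
    | succ m ih => exact (commutator_mono ih ih).trans (commutator_pi_pi_le _ _)
  refine ⟨k, eq_bot_iff.mpr ((hle k).trans fun x hx => funext fun i => ?_)⟩
  simpa [hk] using hx i

theorem MonoidHom.isSolvable_range_of_ker_le {G A B : Type*} [Group G] [Group A] [Group B]
    [Group.IsSolvable B] (φ : G →* B) (ψ : G →* A) (h : φ.ker ≤ ψ.ker) :
    Group.IsSolvable ψ.range := by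
  have : Group.IsSolvable (G ⧸ φ.ker) :=
    Group.isSolvable_of_isSolvable_injective (QuotientGroup.kerLift_injective φ)
  refine Group.isSolvable_of_surjective
    (f := QuotientGroup.lift φ.ker ψ.rangeRestrict (by rwa [MonoidHom.ker_rangeRestrict])) ?_
  intro y
  obtain ⟨x, rfl⟩ := ψ.rangeRestrict_surjective y
  exact ⟨x, rfl⟩

theorem IsSimpleGroup.isPerfect {G : Type*} [Group G] [IsSimpleGroup G]
    (h : ∃ a b : G, a * b ≠ b * a) : Group.IsPerfect G := by
  refine Group.isPerfect_def.mpr ((commutator_normal _ _).eq_bot_or_eq_top.resolve_left ?_)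
  intro hbot
  have := (commutator_eq_bot_iff G).mp hbot
  obtain ⟨a, b, hab⟩ := h
  exact hab (Std.Commutative.comm a b)

namespace Subgroup

variable {ι G : Type*} [Group G] (N : Subgroup (ι → G))

def IsSubdirectProduct : Prop :=
  ∀ i s, ∃ x ∈ N, x i = s

def projOfVanishingOn (T : Set ι) (c : ι) : Subgroup G :=
  (N ⊓ pi T fun _ => ⊥).map (Pi.evalMonoidHom (fun _ => G) c)

def vanishingSetoid : Setoid ι where
  r i j := ∀ x ∈ N, x i = 1 ↔ x j = 1
  iseqv := ⟨fun _ _ _ => Iff.rfl, fun h x hx => (h x hx).symm,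
    fun h₁ h₂ x hx => (h₁ x hx).trans (h₂ x hx)⟩

variable {N}

theorem mem_projOfVanishingOn {T : Set ι} {c : ι} {s : G} :
    s ∈ N.projOfVanishingOn T c ↔ ∃ x ∈ N, (∀ j ∈ T, x j = 1) ∧ x c = s := by
  simp [projOfVanishingOn, mem_pi, and_assoc]

theorem projOfVanishingOn_union [Group.IsPerfect G] {T T' : Set ι} {c : ι}
    (hT : N.projOfVanishingOn T c = ⊤) (hT' : N.projOfVanishingOn T' c = ⊤) :
    N.projOfVanishingOn (T ∪ T') c = ⊤ := by
  have hcomm : ⁅N ⊓ pi T fun _ => ⊥, N ⊓ pi T' fun _ => ⊥⁆ ≤ N ⊓ pi (T ∪ T') fun _ => ⊥ := by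
    have hpi : (pi (T ∪ T') fun _ => (⊥ : Subgroup G)) = (pi T fun _ => ⊥) ⊓ pi T' fun _ => ⊥ := by
      ext x
      simp [mem_pi, or_imp, forall_and]
    rw [hpi]
    refine le_inf ?_ ((commutator_mono inf_le_right inf_le_right).trans (commutator_le_inf _ _))
    exact commutator_le.mpr fun x hx y hy =>
      N.mul_mem (N.mul_mem (N.mul_mem hx.1 hy.1) (N.inv_mem hx.1)) (N.inv_mem hy.1)
  rw [eq_top_iff, ← Group.IsPerfect.commutator_eq_top, _root_.commutator_def]
  calc ⁅(⊤ : Subgroup G), ⊤⁆ = ⁅N.projOfVanishingOn T c, N.projOfVanishingOn T' c⁆ := by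
        rw [hT, hT']
    _ = _ := (map_commutator _ _ _).symm
    _ ≤ _ := map_mono hcomm

theorem mem_of_forall_symm_apply_eq [Fintype ι] {r : Setoid ι} {α : ι → MulAut G}
    (hdiag : ∀ x ∈ N, ∀ i j, r i j → (α i).symm (x i) = (α j).symm (x j))
    (hsep : ∀ d (T : Finset ι), (∀ t ∈ T, ¬ r d t) → N.projOfVanishingOn T d = ⊤)
    {g : ι → G} (hg : ∀ i j, r i j → (α i).symm (g i) = (α j).symm (g j)) : g ∈ N := by
  classical
  suffices ∀ T : Finset ι, ∃ x ∈ N, ∀ j ∈ T, x j = g j by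
    obtain ⟨x, hx, hxg⟩ := this Finset.univ
    rwa [← funext fun j => hxg j (Finset.mem_univ j)]
  intro T
  induction T using Finset.induction_on with
  | empty => exact ⟨1, N.one_mem, by simp⟩
  | insert d T _ ih =>
    obtain ⟨x, hx, hxg⟩ := ih
    by_cases hd : ∃ t ∈ T, r d t
    · obtain ⟨t, ht, hdt⟩ := hd
      refine ⟨x, hx, (Finset.forall_mem_insert _ _ _).mpr ⟨(α d).symm.injective ?_, hxg⟩⟩
      rw [hdiag x hx d t hdt, hxg t ht, hg d t hdt]
    · push Not at hd
      obtain ⟨y, hy, hyT, hyd⟩ :=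
        mem_projOfVanishingOn.mp ((hsep d T hd).symm ▸ mem_top ((x d)⁻¹ * g d))
      refine ⟨x * y, N.mul_mem hx hy, (Finset.forall_mem_insert _ _ _).mpr ⟨by simp [hyd], ?_⟩⟩
      intro j hj
      simp [hyT j hj, hxg j hj]

namespace IsSubdirectProduct

variable (hN : N.IsSubdirectProduct)
include hN

theorem projOfVanishingOn_normal (T : Set ι) (c : ι) : (N.projOfVanishingOn T c).Normal := by
  constructor
  rintro _ ⟨x, hx, rfl⟩ g
  obtain ⟨y, hy, rfl⟩ := hN c g
  exact ⟨y * x * y⁻¹, ⟨N.mul_mem (N.mul_mem hy hx.1) (N.inv_mem hy),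
    Normal.conj_mem inferInstance x hx.2 y⟩, rfl⟩

theorem projOfVanishingOn_empty (c : ι) : N.projOfVanishingOn ∅ c = ⊤ :=
  eq_top_iff.mpr fun s _ => mem_projOfVanishingOn.mpr <| by simpa using hN c s

theorem projOfVanishingOn_eq_top [Group.IsPerfect G] (c : ι) (T : Finset ι)
    (hT : ∀ d ∈ T, N.projOfVanishingOn {d} c = ⊤) : N.projOfVanishingOn T c = ⊤ := by
  classical
  induction T using Finset.induction_on with
  | empty => simpa using hN.projOfVanishingOn_empty c
  | insert d T _ ih =>
    rw [Finset.coe_insert, Set.insert_eq]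
    exact projOfVanishingOn_union (hT d (Finset.mem_insert_self d T))
      (ih fun d hd => hT d (Finset.mem_insert_of_mem hd))

theorem projOfVanishingOn_singleton_eq_top [IsSimpleGroup G] {c d : ι}
    (h : ¬ N.vanishingSetoid c d) : N.projOfVanishingOn {d} c = ⊤ := by
  have hbot : ∀ {c d}, N.projOfVanishingOn {d} c = ⊥ → ∀ x ∈ N, x d = 1 → x c = 1 :=
    fun h x hx hxd => mem_bot.mp (h ▸ mem_projOfVanishingOn.mpr ⟨x, hx, by simpa, rfl⟩)
  refine (hN.projOfVanishingOn_normal {d} c).eq_bot_or_eq_top.resolve_left fun hdc => ?_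
  rcases (hN.projOfVanishingOn_normal {c} d).eq_bot_or_eq_top with hcd | hcd
  · exact h fun x hx => ⟨hbot hcd x hx, hbot hdc x hx⟩
  · obtain ⟨s, hs⟩ := exists_ne (1 : G)
    obtain ⟨y, hy, rfl⟩ := hN c s
    obtain ⟨z, hz, hzc, hzd⟩ := mem_projOfVanishingOn.mp (hcd ▸ mem_top (y d)⁻¹)
    apply hs
    simpa [hzc] using hbot hdc (y * z) (N.mul_mem hy hz) (by simp [hzd])

theorem exists_mulAut_of_vanishingSetoid {c d : ι} (h : N.vanishingSetoid c d) :
    ∃ φ : MulAut G, ∀ x ∈ N, x d = φ (x c) := by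
  have hsurj : ∀ i, Function.Surjective ((Pi.evalMonoidHom (fun _ => G) i).comp N.subtype) :=
    fun i s => let ⟨x, hx, hxs⟩ := hN i s; ⟨⟨x, hx⟩, hxs⟩
  have hker : ((Pi.evalMonoidHom (fun _ => G) c).comp N.subtype).ker =
      ((Pi.evalMonoidHom (fun _ => G) d).comp N.subtype).ker := by
    ext x
    exact h x x.2
  let ec := QuotientGroup.quotientKerEquivOfSurjective _ (hsurj c)
  let ed := QuotientGroup.quotientKerEquivOfSurjective _ (hsurj d)
  refine ⟨ec.symm.trans ((QuotientGroup.quotientMulEquivOfEq hker).trans ed), fun x hx => ?_⟩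
  have : ec.symm (x c) = QuotientGroup.mk ⟨x, hx⟩ := ec.symm_apply_eq.mpr rfl
  rw [MulEquiv.trans_apply, MulEquiv.trans_apply, this]
  rfl

theorem exists_setoid_mulAut_mem_iff [Fintype ι] [IsSimpleGroup G] [Group.IsPerfect G] :
    ∃ (r : Setoid ι) (α : ι → MulAut G),
      ∀ g, g ∈ N ↔ ∀ i j, r i j → (α i).symm (g i) = (α j).symm (g j) := by
  let r := N.vanishingSetoid
  choose α hα using fun i => hN.exists_mulAut_of_vanishingSetoid (Quotient.mk_out (s := r) i)
  have hdiag : ∀ x ∈ N, ∀ i j, r i j → (α i).symm (x i) = (α j).symm (x j) := by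
    intro x hx i j hij
    rw [hα i x hx, hα j x hx, MulEquiv.symm_apply_apply, MulEquiv.symm_apply_apply,
      Quotient.sound hij]
  refine ⟨r, α, fun g => ⟨fun hg => hdiag g hg, mem_of_forall_symm_apply_eq hdiag ?_⟩⟩
  exact fun d T hT => hN.projOfVanishingOn_eq_top d T fun t ht =>
    hN.projOfVanishingOn_singleton_eq_top (hT t ht)

end IsSubdirectProduct

end Subgroup

section

variable {L ι : Type*} [Group L] {S : Subgroup L} [S.Normal] (G : Subgroup (ι → L)) {i : ι}

theorem normal_map_eval_comap_compLeft (hi : S ≤ G.map (Pi.evalMonoidHom (fun _ => L) i)) :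
    ((G.comap (S.subtype.compLeft ι)).map (Pi.evalMonoidHom (fun _ => S) i)).Normal := by
  constructor
  rintro _ ⟨x, hx, rfl⟩ g
  obtain ⟨y, hy, hyi⟩ := hi g.2
  let z : ι → S := fun m => ⟨y m * x m * (y m)⁻¹, Normal.conj_mem ‹_› _ (x m).2 _⟩
  refine ⟨z, (mul_mem (mul_mem hy hx) (inv_mem hy) : y * _ * y⁻¹ ∈ G), Subtype.ext ?_⟩
  change y i * x i * (y i)⁻¹ = g * x i * (g : L)⁻¹
  rw [show y i = g from hyi]

theorem map_eval_comap_compLeft_ne_bot [Group.IsSolvable (L ⧸ S)] (hS : ¬ Group.IsSolvable S)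
    (hi : S ≤ G.map (Pi.evalMonoidHom (fun _ => L) i)) :
    (G.comap (S.subtype.compLeft ι)).map (Pi.evalMonoidHom (fun _ => S) i) ≠ ⊥ := by
  intro hbot
  let Φ : G →* (ι → L ⧸ S) := ((QuotientGroup.mk' S).compLeft ι).comp G.subtype
  let ψ : G →* L := (Pi.evalMonoidHom (fun _ => L) i).comp G.subtype
  have hker : Φ.ker ≤ ψ.ker := by
    intro x hx
    have hxS : ∀ m, (x : ι → L) m ∈ S := fun m => (QuotientGroup.eq_one_iff _).mp (congrFun hx m)
    have : (⟨(x : ι → L) i, hxS i⟩ : S) ∈ (⊥ : Subgroup S) :=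
      hbot ▸ ⟨fun m => ⟨_, hxS m⟩, x.2, rfl⟩
    exact congrArg Subtype.val (mem_bot.mp this)
  have : Group.IsSolvable (ι → L ⧸ S) := isSolvable_pi
  have : Group.IsSolvable ψ.range := Φ.isSolvable_range_of_ker_le ψ hker
  rw [MonoidHom.range_comp, range_subtype] at this
  exact hS (Group.isSolvable_of_isSolvable_injective (inclusion_injective hi))

theorem isSubdirectProduct_comap_compLeft [IsSimpleGroup S] [Group.IsSolvable (L ⧸ S)]
    (hS : ¬ Group.IsSolvable S) (h : ∀ i, S ≤ G.map (Pi.evalMonoidHom (fun _ => L) i)) :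
    (G.comap (S.subtype.compLeft ι)).IsSubdirectProduct := fun i s =>
  mem_map.mp <| ((normal_map_eval_comap_compLeft G (h i)).eq_bot_or_eq_top.resolve_left
    (map_eval_comap_compLeft_ne_bot G hS (h i))) ▸ mem_top s

end

theorem stmt_2_general {L : Type*} [Group L] (S : Subgroup L) [S.Normal]
    [IsSimpleGroup S] (hna : ∃ a b : S, a * b ≠ b * a)
    (hsolv : IsSolvable (L ⧸ S))
    {n : ℕ} (G : Subgroup (Fin n → L))
    (h : ∀ i : Fin n, S ≤ Subgroup.map (Pi.evalMonoidHom (fun _ => L) i) G) :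
    ∃ (r : Setoid (Fin n)) (α : Fin n → MulAut S),
      ∀ g : Fin n → S,
        ((fun i => (g i : L)) ∈ G ↔
          ∀ i j : Fin n, r.r i j → (α i).symm (g i) = (α j).symm (g j)) := by
  have : Group.IsSolvable (L ⧸ S) := hsolv
  have : Group.IsPerfect S := IsSimpleGroup.isPerfect hna
  exact (isSubdirectProduct_comap_compLeft G (Group.IsPerfect.not_isSolvable S) h
    |>.exists_setoid_mulAut_mem_iff)

/-- Let `S ⊴ L` be finite groups with `L/S` solvable and `S` simple
non-abelian. Let `n ≥ 1` and `G ≤ Lⁿ` with `S ≤ proj_i(G)` for all `i`. Then `G ∩ Sⁿ`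
is a product of subdiagonals of `Sⁿ`: there are an equivalence relation `∼` on `{1,…,n}`
and automorphisms `α₁,…,αₙ` of `S` such that an element `g ∈ Sⁿ` belongs to `G` iff
`(α i)⁻¹ (g i) = (α j)⁻¹ (g j)` for all `i ∼ j`. -/
theorem stmt_2 {L : Type*} [Group L] [Finite L] (S : Subgroup L) [S.Normal]
    [IsSimpleGroup S] (hna : ∃ a b : S, a * b ≠ b * a)
    (hsolv : IsSolvable (L ⧸ S))
    {n : ℕ} (hn : 1 ≤ n) (G : Subgroup (Fin n → L))
    (h : ∀ i : Fin n, S ≤ Subgroup.map (Pi.evalMonoidHom (fun _ => L) i) G) :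
    ∃ (r : Setoid (Fin n)) (α : Fin n → MulAut S),
      ∀ g : Fin n → S,
        ((fun i => (g i : L)) ∈ G ↔
          ∀ i j : Fin n, r.r i j → (α i).symm (g i) = (α j).symm (g j)) :=
  stmt_2_general S hna hsolv G h
end

section
/- Let S be a finite simple non-abelian group, let n ≥ 1, and let G be a subgroup of S^n such that proj_i(G) = S for every i ∈ {1,…,n}. Let i, j ∈ {1,…,n} be indices such that every g ∈ G with g_i = 1 also satisfies g_j = 1. Then there exists an automorphism α of S such that g_j = α(g_i) for all g ∈ G. -/
/-- Let `S` be a finite simple non-abelian group, `n ≥ 1`, and `G ≤ Sⁿ`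
with `proj_i(G) = S` for all `i`. If `i, j` are indices such that every `g ∈ G` with
`g i = 1` also satisfies `g j = 1`, then there is an automorphism `α` of `S` with
`g j = α (g i)` for all `g ∈ G`. -/
theorem stmt_3 {S : Type*} [Group S] [Finite S] [IsSimpleGroup S]
    (hna : ∃ a b : S, a * b ≠ b * a) {n : ℕ} (hn : 1 ≤ n)
    (G : Subgroup (Fin n → S))
    (h : ∀ i : Fin n, Subgroup.map (Pi.evalMonoidHom (fun _ => S) i) G = ⊤)
    (i j : Fin n) (hij : ∀ g ∈ G, g i = 1 → g j = 1) :
    ∃ α : MulAut S, ∀ g ∈ G, g j = α (g i) := by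
  set ψ : G →* S := (Pi.evalMonoidHom (fun _ => S) i).comp G.subtype with hψ
  set φ : G →* S := (Pi.evalMonoidHom (fun _ => S) j).comp G.subtype with hφ
  have hψsurj : Function.Surjective ψ := by
    intro s
    have hs : s ∈ Subgroup.map (Pi.evalMonoidHom (fun _ => S) i) G := by
      rw [h i]; trivial
    obtain ⟨g, hg, hgs⟩ := hs
    exact ⟨⟨g, hg⟩, hgs⟩
  have hker : (ψ.ker : Subgroup G) ≤ φ.ker := by
    intro x hx
    exact hij x.1 x.2 hx
  let e := QuotientGroup.quotientKerEquivOfSurjective ψ hψsurj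
  let δ : S →* S := (QuotientGroup.lift ψ.ker φ hker).comp e.symm.toMonoidHom
  have hδ : ∀ g ∈ G, δ (g i) = g j := by
    intro g hg
    have h1 : e.symm (ψ ⟨g, hg⟩) = QuotientGroup.mk ⟨g, hg⟩ := by
      apply e.injective
      rw [e.apply_symm_apply]
      rfl
    show (QuotientGroup.lift ψ.ker φ hker) (e.symm (ψ ⟨g, hg⟩)) = g j
    rw [h1]
    rfl
  have hδsurj : Function.Surjective δ := by
    intro t
    have ht : t ∈ Subgroup.map (Pi.evalMonoidHom (fun _ => S) j) G := by
      rw [h j]; trivial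
    obtain ⟨g, hg, hgt⟩ := ht
    exact ⟨g i, by rw [hδ g hg]; exact hgt⟩
  have hδinj : Function.Injective δ :=
    (Finite.injective_iff_surjective).2 hδsurj
  exact ⟨MulEquiv.ofBijective δ ⟨hδinj, hδsurj⟩, fun g hg => (hδ g hg).symm⟩
end

section
/- Let S be a finite simple non-abelian group, let n ≥ 1, and let G be a subgroup of S^n such that proj_i(G) = S for every i ∈ {1,…,n}. Define a relation ∼ on {1,…,n} by declaring i ∼ j if and only if every g ∈ G with g_i = 1 also satisfies g_j = 1. Then ∼ is an equivalence relation on {1,…,n}; in particular, it is symmetric. -/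
/-- Let `S` be a finite simple non-abelian group, `n ≥ 1`, and `G ≤ Sⁿ`
with `proj_i(G) = S` for all `i`. The relation `i ∼ j ↔ (∀ g ∈ G, g i = 1 → g j = 1)`
is an equivalence relation on `{1,…,n}` (in particular it is symmetric). -/
theorem stmt_4 {S : Type*} [Group S] [Finite S] [IsSimpleGroup S]
    (hna : ∃ a b : S, a * b ≠ b * a) {n : ℕ} (hn : 1 ≤ n)
    (G : Subgroup (Fin n → S))
    (h : ∀ i : Fin n, Subgroup.map (Pi.evalMonoidHom (fun _ => S) i) G = ⊤) :
    Equivalence (fun i j : Fin n => ∀ g ∈ G, g i = 1 → g j = 1) := by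
  have surj : ∀ (i : Fin n) (s : S), ∃ g ∈ G, g i = s := by
    intro i s
    have hs : s ∈ Subgroup.map (Pi.evalMonoidHom (fun _ => S) i) G := by
      rw [h i]; trivial
    rcases Subgroup.mem_map.mp hs with ⟨g, hg, hgi⟩
    exact ⟨g, hg, hgi⟩
  constructor
  · intro i g _ hgi; exact hgi
  · -- symmetry
    intro i j hij g hg hgj
    -- kernel containment key: elements of G agreeing at i agree at j
    have key : ∀ a ∈ G, ∀ b ∈ G, a i = b i → a j = b j := by
      intro a ha b hb hab
      have hmem : a⁻¹ * b ∈ G := mul_mem (inv_mem ha) hb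
      have h1 : (a⁻¹ * b) i = 1 := by
        simp [Pi.mul_apply, Pi.inv_apply, hab]
      have h2 := hij _ hmem h1
      simp only [Pi.mul_apply, Pi.inv_apply] at h2
      exact (inv_mul_eq_one.mp h2)
    -- choose preimages
    choose c hcG hci using surj i
    set f : S → S := fun s => c s j with hf
    have fsurj : Function.Surjective f := by
      intro t
      rcases surj j t with ⟨a, ha, haj⟩
      refine ⟨a i, ?_⟩
      have := key (c (a i)) (hcG _) a ha (by rw [hci])
      rw [hf]; simpa [haj] using this
    have finj : Function.Injective f := Finite.injective_iff_surjective.mpr fsurj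
    have hf1 : f 1 = 1 := hij _ (hcG 1) (hci 1)
    have hfg : f (g i) = g j := key (c (g i)) (hcG _) g hg (hci _)
    have : f (g i) = f 1 := by rw [hfg, hf1, hgj]
    exact finj this
  · intro i j k hij hjk g hg hgi
    exact hjk g hg (hij g hg hgi)
end

section
/- Let F be a finite group and let S be a normal subgroup of F which is simple non-abelian and of index 2 in F. If the outer automorphism group Out(S) is solvable, then the outer automorphism group Out(F) is solvable. -/
/-!
Because `S` is perfect and `F ⧸ S` is abelian, `S = ⁅F, F⁆` is characteristic, so restriction
gives a homomorphism `Aut F → Out S`. An automorphism `φ` in its kernel agrees on `S` with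
conjugation by some `s ∈ S`, so `ψ = (conj s)⁻¹ * φ` fixes `S` pointwise. Then every `g⁻¹ * ψ g`
centralizes `S`. If `ψ g ∉ S` then `g ∉ S`, so the index-two condition puts `g⁻¹ * ψ g` in `S`,
hence in `Z(S) = 1`; if `ψ g ∈ S`, then `ψ (ψ g) = ψ g` forces `ψ g = g`. Thus `ψ = 1`, the kernel
consists of inner automorphisms, and `Out F` is a quotient of a subgroup of `Out S`.
-/

/-- The inner automorphisms form a normal subgroup of the automorphism group. -/
instance innerAutRange_normal {G : Type*} [Group G] :
    ((MulAut.conj : G →* MulAut G).range).Normal := by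
  constructor
  intro x hx φ
  obtain ⟨g, rfl⟩ := hx
  refine ⟨φ g, ?_⟩
  ext y
  simp only [MulAut.conj_apply, MulAut.mul_apply, MulAut.inv_def, map_mul, map_inv,
    MulEquiv.apply_symm_apply]

/-- The outer automorphism group `Out(G) = Aut(G)/Inn(G)`. -/
def OutGroup (G : Type*) [Group G] : Type _ :=
  MulAut G ⧸ (MulAut.conj : G →* MulAut G).range

noncomputable instance (G : Type*) [Group G] : Group (OutGroup G) :=
  inferInstanceAs (Group (MulAut G ⧸ (MulAut.conj : G →* MulAut G).range))

theorem Group.isSolvable_quotient_of_ker_le {G H : Type*} [Group G] [Group H]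
    [hH : Group.IsSolvable H] (f : G →* H) {N : Subgroup G} [N.Normal] (h : f.ker ≤ N) :
    Group.IsSolvable (G ⧸ N) := by
  have := Group.isSolvable_of_isSolvable_injective (QuotientGroup.kerLift_injective f)
  exact Group.isSolvable_of_surjective
    (QuotientGroup.map_surjective_of_surjective _ _ (MonoidHom.id G) QuotientGroup.mk_surjective h)

namespace IsSimpleGroup

variable {G : Type*} [Group G] [IsSimpleGroup G]

theorem center_eq_bot (h : ∃ a b : G, a * b ≠ b * a) : Subgroup.center G = ⊥ := by
  refine (Subgroup.center G).normal_of_characteristic.eq_bot_or_eq_top.resolve_right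
    fun htop => ?_
  obtain ⟨a, b, hab⟩ := h
  exact hab (Subgroup.mem_center_iff.mp (htop ▸ Subgroup.mem_top b) a)

theorem isPerfect_s5 (h : ∃ a b : G, a * b ≠ b * a) : Group.IsPerfect G := by
  refine Group.isPerfect_def.mpr
    ((commutator G).normal_of_characteristic.eq_bot_or_eq_top.resolve_left fun hbot => ?_)
  rw [commutator_eq_bot_iff_center_eq_top, center_eq_bot h] at hbot
  exact bot_ne_top hbot

end IsSimpleGroup

section

variable {G : Type*} [Group G] {S : Subgroup G}

theorem Subgroup.commutator_le_of_index_eq_two (hidx : S.index = 2) :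
    _root_.commutator G ≤ S := by
  rw [_root_.commutator, Subgroup.commutator_le]
  intro a _ b _
  simp only [commutatorElement_def, Subgroup.mul_mem_iff_of_index_two hidx, inv_mem_iff]
  tauto

theorem Subgroup.eq_commutator_of_index_eq_two [Group.IsPerfect S] (hidx : S.index = 2) :
    S = _root_.commutator G :=
  le_antisymm
    (calc S = ⁅S, S⁆ := S.commutator_eq_self.symm
      _ ≤ _root_.commutator G := Subgroup.commutator_mono le_top le_top)
    (commutator_le_of_index_eq_two hidx)

theorem inv_mul_apply_mem_centralizer [S.Normal] {φ : MulAut G}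
    (hφ : φ ∈ fixingSubgroup (MulAut G) (S : Set G)) (g : G) :
    g⁻¹ * φ g ∈ Subgroup.centralizer (S : Set G) := by
  have hfix : ∀ s ∈ S, φ s = s := (mem_fixingSubgroup_iff _).mp hφ
  refine Subgroup.mem_centralizer_iff.mpr fun s hs => ?_
  have hconj : φ (g * s * g⁻¹) = g * s * g⁻¹ := hfix _ (‹S.Normal›.conj_mem s hs g)
  rw [map_mul, map_mul, map_inv, hfix s hs] at hconj
  calc s * (g⁻¹ * φ g) = g⁻¹ * (g * s * g⁻¹) * φ g := by group
    _ = g⁻¹ * (φ g * s * (φ g)⁻¹) * φ g := by rw [hconj]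
    _ = g⁻¹ * φ g * s := by group

theorem fixingSubgroup_eq_bot_of_index_eq_two [S.Normal] (hS : Subgroup.center S = ⊥)
    (hidx : S.index = 2) : fixingSubgroup (MulAut G) (S : Set G) = ⊥ := by
  refine (Subgroup.eq_bot_iff_forall _).mpr fun φ hφ => MulEquiv.ext fun g => ?_
  have hfix : ∀ s ∈ S, φ s = s := (mem_fixingSubgroup_iff _).mp hφ
  by_cases hφg : φ g ∈ S
  · exact φ.injective (hfix _ hφg)
  have hg : g ∉ S := fun hg => hφg (by rwa [hfix g hg])
  have hmem : g⁻¹ * φ g ∈ S :=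
    (Subgroup.mul_mem_iff_of_index_two hidx).mpr (by simp [hg, hφg])
  have hcenter : (⟨g⁻¹ * φ g, hmem⟩ : S) ∈ Subgroup.center S :=
    Subgroup.mem_center_iff.mpr fun s =>
      Subtype.ext (Subgroup.mem_centralizer_iff.mp (inv_mul_apply_mem_centralizer hφ g) s s.2)
  rw [hS, Subgroup.mem_bot] at hcenter
  exact (inv_mul_eq_one.mp (congrArg Subtype.val hcenter)).symm

end

namespace MulAut

variable {G : Type*} [Group G]

def outRestrict (S : Subgroup G) [S.Characteristic] : MulAut G →* OutGroup S :=
  (QuotientGroup.mk' _).comp (MulAut.characteristic S)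

theorem ker_outRestrict_le {S : Subgroup G} [S.Characteristic]
    (hfix : fixingSubgroup (MulAut G) (S : Set G) = ⊥) :
    (outRestrict S).ker ≤ (MulAut.conj : G →* MulAut G).range := by
  intro φ hφ
  obtain ⟨s, hs⟩ : MulAut.characteristic S φ ∈ (MulAut.conj : S →* MulAut S).range :=
    (QuotientGroup.eq_one_iff _).mp hφ
  have hrestrict : ∀ x ∈ S, φ x = s * x * (s : G)⁻¹ := fun x hx =>
    (congrArg Subtype.val (DFunLike.congr_fun hs (⟨x, hx⟩ : S))).symm
  have hinner : (MulAut.conj (s : G))⁻¹ * φ ∈ fixingSubgroup (MulAut G) (S : Set G) :=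
    (mem_fixingSubgroup_iff _).mpr fun x hx => by
      rw [MulAut.smul_def, MulAut.mul_apply, hrestrict x hx, MulAut.conj_inv_apply]
      group
  rw [hfix, Subgroup.mem_bot, inv_mul_eq_one] at hinner
  exact ⟨s, hinner⟩

end MulAut

theorem stmt_5_general {F : Type*} [Group F] (S : Subgroup F) [S.Normal]
    [IsSimpleGroup S] (hna : ∃ a b : S, a * b ≠ b * a)
    (hidx : S.index = 2)
    (hOutS : IsSolvable (OutGroup ↥S)) :
    IsSolvable (OutGroup F) := by
  have := IsSimpleGroup.isPerfect_s5 hna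
  have : S.Characteristic := S.eq_commutator_of_index_eq_two hidx ▸ inferInstance
  exact Group.isSolvable_quotient_of_ker_le (hH := hOutS) (MulAut.outRestrict S)
    (MulAut.ker_outRestrict_le
      (fixingSubgroup_eq_bot_of_index_eq_two (IsSimpleGroup.center_eq_bot hna) hidx))

/-- Let `F` be a finite group and `S ⊴ F` simple non-abelian of index 2.
If `Out(S)` is solvable, then `Out(F)` is solvable. -/
theorem stmt_5 {F : Type*} [Group F] [Finite F] (S : Subgroup F) [S.Normal]
    [IsSimpleGroup S] (hna : ∃ a b : S, a * b ≠ b * a)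
    (hidx : S.index = 2)
    (hOutS : IsSolvable (OutGroup ↥S)) :
    IsSolvable (OutGroup F) :=
  stmt_5_general S hna hidx hOutS
end

section
/- Let d ≥ 2 and let F be a subgroup of the symmetric group Sym(d) acting 2-transitively on {1,…,d}. Let F(1) denote the stabilizer of the point 1 in F, and suppose there is a normal subgroup S of F(1) which is simple non-abelian, has index at most 2 in F(1), and is contained in every non-trivial normal subgroup of F(1). Then every normal subgroup N of F such that the quotient F/N is solvable satisfies [F : N] ≤ 2. -/
/-!
Let `H` be the stabilizer of a point. `H` contains the non-solvable group `S`, so it is not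
solvable and cannot embed into the solvable quotient `F ⧸ N`; hence `N ⊓ H` is a non-trivial
normal subgroup of `H` and contains `S`. In particular `N ≠ ⊥`, and a non-trivial normal
subgroup of a 2-transitive (hence primitive) permutation group is transitive. By the Frattini
argument `F = N H`, so `[F : N] = [H : N ⊓ H]` divides `[H : S] ≤ 2`.
-/

open MulAction Subgroup

section

variable {G α : Type*} [Group G] [MulAction G α]

theorem MulAction.fixedPoints_ne_univ_of_faithfulSMul [Nontrivial G] [FaithfulSMul G α] :
    fixedPoints G α ≠ Set.univ := by
  obtain ⟨g, hg⟩ := exists_ne (1 : G)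
  intro h
  refine hg (eq_of_smul_eq_smul (α := α) fun a ↦ ?_)
  have ha : a ∈ fixedPoints G α := h ▸ Set.mem_univ a
  rw [ha g, one_smul]

theorem MulAction.sup_stabilizer_eq_top_of_isPretransitive (N : Subgroup G)
    [IsPretransitive N α] (a : α) : N ⊔ stabilizer G a = ⊤ := by
  refine eq_top_iff.mpr fun g _ ↦ ?_
  obtain ⟨n, hn⟩ := exists_smul_eq N a (g • a)
  rw [← mul_inv_cancel_left (n : G) g]
  refine mul_mem_sup n.2 (mem_stabilizer_iff.mpr ?_)
  rw [mul_smul, ← hn, Subgroup.smul_def, inv_smul_smul]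

theorem MulAction.index_eq_relIndex_stabilizer (N : Subgroup G) [N.Normal]
    [IsPretransitive N α] (a : α) : N.index = N.relIndex (stabilizer G a) := by
  rw [← relIndex_sup_left, sup_stabilizer_eq_top_of_isPretransitive, relIndex_top_right]

theorem Subgroup.isSolvable_of_isSolvable_subgroupOf (N H : Subgroup G) [N.Normal]
    [Group.IsSolvable (G ⧸ N)] [Group.IsSolvable (N.subgroupOf H)] : Group.IsSolvable H := by
  refine Group.isSolvable_of_ker_le_range (N.subgroupOf H).subtype
    ((QuotientGroup.mk' N).comp H.subtype) fun h hh ↦ ?_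
  rw [range_subtype]
  simpa [mem_subgroupOf] using hh

theorem MulAction.index_dvd_index_of_isSolvable_quotient [FaithfulSMul G α]
    (h2 : IsMultiplyPretransitive G α 2) (a : α)
    (S : Subgroup (stabilizer G a)) [IsSimpleGroup S] (hna : ∃ x y : S, x * y ≠ y * x)
    (hmin : ∀ M : Subgroup (stabilizer G a), M.Normal → M ≠ ⊥ → S ≤ M)
    (N : Subgroup G) [N.Normal] [Group.IsSolvable (G ⧸ N)] : N.index ∣ S.index := by
  have hS : ¬ Group.IsSolvable S := fun h ↦ by
    obtain ⟨x, y, hxy⟩ := hna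
    exact hxy (IsSimpleGroup.comm_iff_isSolvable.mpr h x y)
  have hNH : N.subgroupOf (stabilizer G a) ≠ ⊥ := fun h ↦ by
    have : Group.IsSolvable (N.subgroupOf (stabilizer G a)) := h ▸ inferInstance
    have := N.isSolvable_of_isSolvable_subgroupOf (stabilizer G a)
    exact hS inferInstance
  have : Nontrivial N := (nontrivial_iff_ne_bot N).mpr fun h ↦ hNH (h ▸ bot_subgroupOf _)
  have := isPreprimitive_of_is_two_pretransitive h2
  have : IsPretransitive N α :=
    IsQuasiPreprimitive.isPretransitive_of_normal fixedPoints_ne_univ_of_faithfulSMul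
  rw [index_eq_relIndex_stabilizer N a]
  exact index_dvd_of_le (hmin _ inferInstance hNH)

end

/-- Let `d ≥ 2` and let `F ≤ Sym(d)` be 2-transitive on `{1,…,d}`.
Suppose the point stabilizer `F(1)` has a normal subgroup `S` which is simple
non-abelian, of index at most 2, and contained in every non-trivial normal subgroup of
`F(1)`. Then every normal subgroup `N` of `F` with `F/N` solvable has index `≤ 2`. -/
theorem stmt_6 (d : ℕ) (hd : 2 ≤ d) (F : Subgroup (Equiv.Perm (Fin d)))
    (h2t : ∀ a b c e : Fin d, a ≠ b → c ≠ e → ∃ σ ∈ F, σ a = c ∧ σ b = e)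
    (S : Subgroup ↥(MulAction.stabilizer F (⟨0, by omega⟩ : Fin d)))
    [IsSimpleGroup S] (hna : ∃ a b : S, a * b ≠ b * a)
    (hidx : S.index ≤ 2)
    (hmin : ∀ N : Subgroup ↥(MulAction.stabilizer F (⟨0, by omega⟩ : Fin d)),
      N.Normal → N ≠ ⊥ → S ≤ N)
    (N : Subgroup F) [N.Normal] (hsolv : IsSolvable (F ⧸ N)) :
    N.index ≤ 2 := by
  have h2 : IsMultiplyPretransitive F (Fin d) 2 :=
    is_two_pretransitive_iff.mpr fun hab hce ↦ by
      obtain ⟨σ, hσ, hσa, hσb⟩ := h2t _ _ _ _ hab hce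
      exact ⟨⟨σ, hσ⟩, hσa, hσb⟩
  have : Group.IsSolvable (F ⧸ N) := hsolv
  have hdvd := index_dvd_index_of_isSolvable_quotient h2 _ S hna hmin N
  exact (Nat.le_of_dvd (Nat.pos_of_ne_zero index_ne_zero_of_finite) hdvd).trans hidx
end
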